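/- The neighbor map h = f₄₄⁻¹ ∘ f₅₁ (i.e., (f₄∘f₄)⁻¹ ∘ (f₅∘f₁)) is an orientation-preserving isometry whose linear part is the rotation matrix [[4/5,-3/5],[3/5,4/5]], and h maps the point L = (3/5, 4/5) to V = (1,0). -/

import Mathlib

noncomputable def pt (x y : ℝ) : EuclideanSpace ℝ (Fin 2) := WithLp.toLp 2 ![x, y]

noncomputable def f1 (p : EuclideanSpace ℝ (Fin 2)) : EuclideanSpace ℝ (Fin 2) :=
  pt ((2 * p 0 + p 1) / 5) ((p 0 - 2 * p 1) / 5)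
noncomputable def f4 (p : EuclideanSpace ℝ (Fin 2)) : EuclideanSpace ℝ (Fin 2) :=
  pt ((2 * p 0 - p 1 + 2) / 5) ((p 0 + 2 * p 1 + 1) / 5)
noncomputable def f5 (p : EuclideanSpace ℝ (Fin 2)) : EuclideanSpace ℝ (Fin 2) :=
  pt ((- p 0 + 2 * p 1 + 4) / 5) ((2 * p 0 + p 1 + 2) / 5)

/-- The neighbor map `h(x,y) = (0.8x - 0.6y + 1, 0.6x + 0.8y - 1)`. -/
noncomputable def nbr (p : EuclideanSpace ℝ (Fin 2)) : EuclideanSpace ℝ (Fin 2) :=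
  pt (0.8 * p 0 - 0.6 * p 1 + 1) (0.6 * p 0 + 0.8 * p 1 - 1)

lemma pt_apply0 (x y : ℝ) : pt x y 0 = x := rfl
lemma pt_apply1 (x y : ℝ) : pt x y 1 = y := rfl

lemma pt_ext (p : EuclideanSpace ℝ (Fin 2)) : p = pt (p 0) (p 1) := by
  ext i; fin_cases i <;> rfl

/-- `nbr = (f₄∘f₄)⁻¹ ∘ (f₅∘f₁)` (i.e. `f₄∘f₄∘nbr = f₅∘f₁`); `nbr` is an isometry
whose linear part is the rotation matrix `[[4/5,-3/5],[3/5,4/5]]`, and it maps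
`L = (3/5, 4/5)` to `V = (1,0)`. -/
theorem nbr_properties :
    (∀ p, f4 (f4 (nbr p)) = f5 (f1 p)) ∧
    Isometry nbr ∧
    (∀ p, nbr p - nbr 0 = pt (4 / 5 * p 0 - 3 / 5 * p 1) (3 / 5 * p 0 + 4 / 5 * p 1)) ∧
    nbr (pt (3 / 5) (4 / 5)) = pt 1 0 := by
  refine ⟨?_, ?_, ?_, ?_⟩
  · intro p
    ext i
    fin_cases i <;>
      simp [f4, f5, f1, nbr, pt_apply0, pt_apply1] <;> ring
  · rw [isometry_iff_dist_eq]
    intro p q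
    rw [EuclideanSpace.dist_eq, EuclideanSpace.dist_eq]
    congr 1
    rw [Fin.sum_univ_two, Fin.sum_univ_two]
    simp only [nbr, pt_apply0, pt_apply1, Real.dist_eq, sq_abs]
    ring
  · intro p
    ext i
    have h0 : (0 : EuclideanSpace ℝ (Fin 2)) 0 = 0 := rfl
    have h1 : (0 : EuclideanSpace ℝ (Fin 2)) 1 = 0 := rfl
    fin_cases i <;>
      simp [nbr, pt_apply0, pt_apply1, h0, h1, PiLp.sub_apply] <;> ring
  · ext i
    fin_cases i <;>
      simp [nbr, pt_apply0, pt_apply1] <;> norm_num
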